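/- Let X = ℙ(O_{ℙ²} ⊕ O_{ℙ²}(2)) with projection π: X → ℙ², let D be the section with normal bundle O_D(−2), and let ℓ denote a line in ℙ². Then for every α ≥ 1, the divisor L = αD + (2α+1)π*ℓ is an ample Cartier divisor with L|_D ∼ ℓ, and L + D is not nef. -/

import Mathlib

namespace P2BundleExample

/-! Divisor classes on `X = ℙ(O_{ℙ²} ⊕ O_{ℙ²}(2))` with projection `π : X → ℙ²`.
The class `(a, b) : ℤ × ℤ` denotes `a·D + b·π*ℓ`, where `D` is the section with normal
bundle `O_D(−2)` and `ℓ` is a line in `ℙ²`.  The Mori cone of this smooth toric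
threefold is spanned by two curve classes: a fiber `f` of `π` (with `D·f = 1`,
`π*ℓ·f = 0`) and a line `λ ⊂ D ≅ ℙ²` (with `D·λ = −2`, `π*ℓ·λ = 1`). -/

/-- intersection with a fiber `f` of `π` -/
def dotFiber (M : ℤ × ℤ) : ℤ := M.1

/-- intersection with a line `λ ⊂ D` -/
def dotLine (M : ℤ × ℤ) : ℤ := M.2 - 2 * M.1

/-- A divisor class is nef iff it is nonnegative on the two extremal curve classes. -/
def IsNef (M : ℤ × ℤ) : Prop := 0 ≤ dotFiber M ∧ 0 ≤ dotLine M

/-- A (Cartier) divisor class is ample iff it is positive on the two extremal curve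
classes (Kleiman's criterion on a projective toric variety). -/
def IsAmple (M : ℤ × ℤ) : Prop := 0 < dotFiber M ∧ 0 < dotLine M

/-- `O_X(aD + bπ*ℓ)|_D ≅ O_{ℙ²}(b − 2a)`: the degree of the restriction to `D ≅ ℙ²`. -/
def restrictToD (M : ℤ × ℤ) : ℤ := M.2 - 2 * M.1

/-- the class of the section `D` -/
def Dclass : ℤ × ℤ := (1, 0)

theorem dotLine_add (M N : ℤ × ℤ) : dotLine (M + N) = dotLine M + dotLine N := by
  simp only [dotLine, Prod.fst_add, Prod.snd_add]
  ring

theorem dotLine_Dclass : dotLine Dclass = -2 := rfl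

theorem restrictToD_eq_dotLine (M : ℤ × ℤ) : restrictToD M = dotLine M := rfl

theorem not_isNef_add_Dclass {M : ℤ × ℤ} (hM : dotLine M ≤ 1) : ¬ IsNef (M + Dclass) :=
  fun hNef => by
    have := hNef.2
    rw [dotLine_add, dotLine_Dclass] at this
    omega

theorem dotLine_mk_two_mul_add_one (α : ℤ) : dotLine (α, 2 * α + 1) = 1 := by
  simp only [dotLine]
  ring

/-- Let `X = ℙ(O_{ℙ²} ⊕ O_{ℙ²}(2))` with projection `π : X → ℙ²`, let `D` be the
section with normal bundle `O_D(−2)`, and let `ℓ` denote a line in `ℙ²`. Then for every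
`α ≥ 1`, the divisor `L = αD + (2α+1)π*ℓ` is an ample Cartier divisor with `L|_D ∼ ℓ`,
and `L + D` is not nef. -/
theorem ample_with_nonnef_sum (α : ℤ) (hα : 1 ≤ α) :
    IsAmple (α, 2 * α + 1) ∧ restrictToD (α, 2 * α + 1) = 1 ∧
      ¬ IsNef ((α, 2 * α + 1) + Dclass) := by
  have hLine := dotLine_mk_two_mul_add_one α
  exact ⟨⟨hα, by omega⟩, (restrictToD_eq_dotLine _).trans hLine, not_isNef_add_Dclass hLine.le⟩

end P2BundleExample
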